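/- For any two perfect matchings P, P' of a snake graph G, the symmetric difference (P ∪ P') \ (P ∩ P') is a disjoint union of cycles in G, and each such cycle encloses a set of consecutive tiles forming a connected snake subgraph of G. -/

import Mathlib

/-- A position in the integer grid; tiles are unit squares with a given south-west corner. -/
abbrev Pos : Type := ℤ × ℤ

/-- An edge of the grid: a base vertex together with a direction
(`true` = horizontal edge to the east, `false` = vertical edge to the north). -/
abbrev SEdge : Type := Pos × Bool

/-- The two endpoints of an edge. -/
def edgeVerts (e : SEdge) : Finset Pos :=
  {e.1, if e.2 then (e.1.1 + 1, e.1.2) else (e.1.1, e.1.2 + 1)}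

/-- The four edges of the unit-square tile whose south-west corner is `p`:
bottom, left, right and top edges. -/
def tileEdges (p : Pos) : Finset SEdge :=
  {(p, true), (p, false), ((p.1 + 1, p.2), false), ((p.1, p.2 + 1), true)}

/-- The four vertices of the tile with south-west corner `p`. -/
def tileVerts (p : Pos) : Finset Pos := (tileEdges p).biUnion edgeVerts

/-- The list of south-west corners of the tiles of a snake graph built from gluing data `g`
(`true` = the next tile is glued to the right edge, `false` = glued to the top edge),
starting at position `p`. -/
def tilePosFrom : List Bool → Pos → List Pos
  | [], p => [p]
  | b :: g, p => p :: tilePosFrom g (if b then (p.1 + 1, p.2) else (p.1, p.2 + 1))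

/-- The tiles of the snake graph with gluing data `g`; a snake graph with `n + 1` tiles
corresponds to `g` of length `n`. -/
def snakeTiles (g : List Bool) : List Pos := tilePosFrom g (0, 0)

/-- The edge set of the snake graph with gluing data `g`. -/
def snakeEdges (g : List Bool) : Finset SEdge :=
  (snakeTiles g).toFinset.biUnion tileEdges

/-- The vertex set of the snake graph with gluing data `g`. -/
def snakeVerts (g : List Bool) : Finset Pos := (snakeEdges g).biUnion edgeVerts

/-- `P` is a perfect matching of the graph with edge set `E`: a subset of the edges such
that every vertex is incident to exactly one edge of `P`. -/
def IsPM (E P : Finset SEdge) : Prop :=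
  P ⊆ E ∧ ∀ v ∈ E.biUnion edgeVerts, ∃! e, e ∈ P ∧ v ∈ edgeVerts e

/-- The boundary edges of the snake graph: edges lying in exactly one tile. -/
def boundary (g : List Bool) : Finset SEdge :=
  (snakeEdges g).filter
    (fun e => (snakeTiles g).countP (fun p => decide (e ∈ tileEdges p)) = 1)

/-- `P` is the minimal perfect matching of the snake graph with gluing data `g`:
the perfect matching consisting only of boundary edges which contains the bottom
edge of the first tile. -/
def IsMinPM (g : List Bool) (P : Finset SEdge) : Prop :=
  IsPM (snakeEdges g) P ∧ P ⊆ boundary g ∧ (((0 : ℤ), (0 : ℤ)), true) ∈ P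

/-- The tiles of the snake subgraph of `g` consisting of the consecutive tiles
`a, a+1, …, b`. -/
def subTiles (g : List Bool) (a b : ℕ) : List Pos := ((snakeTiles g).drop a).take (b + 1 - a)

/-- The edge set of the snake subgraph of `g` on the consecutive tiles `a, …, b`. -/
def subEdges (g : List Bool) (a b : ℕ) : Finset SEdge :=
  (subTiles g a b).toFinset.biUnion tileEdges

/-- The boundary cycle of the snake subgraph on tiles `a, …, b`: its edges lying in
exactly one of these tiles. -/
def subBoundary (g : List Bool) (a b : ℕ) : Finset SEdge :=
  (subEdges g a b).filter
    (fun e => (subTiles g a b).countP (fun p => decide (e ∈ tileEdges p)) = 1)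

/-!
The symmetric difference `D` of two perfect matchings meets every vertex in `0` or `2` edges,
so it has even degree everywhere. Such an edge set of a snake graph is the mod-2 boundary of a
set of tiles: the first tile `p` has two corners that no later tile touches, and even degree at
these corners puts its three unshared edges either all in `D` or all outside `D`; so `D` or
`D ∆ tileEdges p` lives on the remaining snake, and induction applies.

Tile `i` has south-west corner with coordinate sum `i`, so two tiles share an edge only if
their indices differ by at most one. Hence the mod-2 boundary of a set `T` of tile indices is
the disjoint union of the boundaries of the maximal runs of consecutive indices in `T`.
-/

open Finset
open scoped symmDiff

section MaxRuns

def IsMaxRun (T : Finset ℕ) (c d : ℕ) : Prop :=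
  c ≤ d ∧ Icc c d ⊆ T ∧ (0 < c → c - 1 ∉ T) ∧ d + 1 ∉ T

instance (T : Finset ℕ) (c d : ℕ) : Decidable (IsMaxRun T c d) := by
  unfold IsMaxRun; infer_instance

def maxRuns (T : Finset ℕ) : Finset (ℕ × ℕ) :=
  (T ×ˢ T).filter fun q => IsMaxRun T q.1 q.2

lemma mem_maxRuns {T : Finset ℕ} {q : ℕ × ℕ} : q ∈ maxRuns T ↔ IsMaxRun T q.1 q.2 := by
  refine ⟨fun h => (mem_filter.1 h).2, fun h => mem_filter.2 ⟨?_, h⟩⟩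
  exact mem_product.2 ⟨h.2.1 (left_mem_Icc.2 h.1), h.2.1 (right_mem_Icc.2 h.1)⟩

lemma exists_isMaxRun {T : Finset ℕ} {k : ℕ} (hk : k ∈ T) :
    ∃ c d, IsMaxRun T c d ∧ k ∈ Icc c d := by
  have hc : ∃ c, Icc c k ⊆ T := ⟨k, by simpa using hk⟩
  obtain ⟨n, hn⟩ := T.exists_nat_subset_range
  have hd : ∃ d, k ≤ d ∧ d + 1 ∉ T :=
    ⟨k + n, by omega, fun h => by have := mem_range.1 (hn h); omega⟩
  have hcT : Icc (Nat.find hc) k ⊆ T := Nat.find_spec hc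
  have hkd : Icc k (Nat.find hd) ⊆ T := by
    intro j hj
    rw [mem_Icc] at hj
    rcases hj.1.eq_or_lt with rfl | hlt
    · exact hk
    · have := Nat.find_min hd (m := j - 1) (by omega)
      simp only [not_and, not_not] at this
      simpa [show j - 1 + 1 = j by omega] using this (by omega)
  refine ⟨Nat.find hc, Nat.find hd, ⟨?_, ?_, ?_, (Nat.find_spec hd).2⟩, ?_⟩
  · exact (Nat.find_min' hc (by simpa using hk)).trans (Nat.find_spec hd).1
  · intro j hj
    rw [mem_Icc] at hj
    rcases le_total j k with h | h
    · exact hcT (mem_Icc.2 ⟨hj.1, h⟩)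
    · exact hkd (mem_Icc.2 ⟨h, hj.2⟩)
  · intro hpos hmem
    refine Nat.find_min hc (m := Nat.find hc - 1) (by omega) fun j hj => ?_
    rw [mem_Icc] at hj
    rcases hj.1.eq_or_lt with h | h
    · exact h ▸ hmem
    · exact hcT (mem_Icc.2 ⟨by omega, hj.2⟩)
  · exact mem_Icc.2 ⟨Nat.find_min' hc (by simpa using hk), (Nat.find_spec hd).1⟩

lemma IsMaxRun.eq_of_mem {T : Finset ℕ} {c d c' d' k : ℕ} (h : IsMaxRun T c d)
    (h' : IsMaxRun T c' d') (hk : k ∈ Icc c d) (hk' : k ∈ Icc c' d') : c = c' ∧ d = d' := by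
  rw [mem_Icc] at hk hk'
  have mem : ∀ {c d j}, IsMaxRun T c d → c ≤ j → j ≤ d → j ∈ T :=
    fun h h1 h2 => h.2.1 (mem_Icc.2 ⟨h1, h2⟩)
  have hc : ¬ c < c' := fun hlt => h'.2.2.1 (by omega) (mem h (by omega) (by omega))
  have hc' : ¬ c' < c := fun hlt => h.2.2.1 (by omega) (mem h' (by omega) (by omega))
  have hd : ¬ d < d' := fun hlt => h.2.2.2 (mem h' (by omega) (by omega))
  have hd' : ¬ d' < d := fun hlt => h'.2.2.2 (mem h (by omega) (by omega))
  omega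

variable {α : Type*} [DecidableEq α] {f : ℕ → Finset α} {T : Finset ℕ}

lemma filter_Icc_eq_of_isMaxRun (hf : ∀ i ∈ T, ∀ j ∈ T, ∀ a, a ∈ f i → a ∈ f j → i ≤ j + 1)
    {c d k : ℕ} {a : α} (hrun : IsMaxRun T c d) (hk : k ∈ Icc c d) (ha : a ∈ f k) :
    (Icc c d).filter (a ∈ f ·) = T.filter (a ∈ f ·) := by
  ext m
  simp only [mem_filter]
  refine ⟨fun ⟨hm, hma⟩ => ⟨hrun.2.1 hm, hma⟩, fun ⟨hm, hma⟩ => ⟨?_, hma⟩⟩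
  have hkT := hrun.2.1 hk
  have h1 := hf m hm k hkT a hma ha
  have h2 := hf k hkT m hm a ha hma
  rw [mem_Icc] at hk ⊢
  by_contra hout
  rcases (show m = d + 1 ∨ (0 < c ∧ m = c - 1) by omega) with rfl | ⟨hc, rfl⟩
  · exact hrun.2.2.2 hm
  · exact hrun.2.2.1 hc hm

lemma card_filter_le_two (hf : ∀ i ∈ T, ∀ j ∈ T, ∀ a, a ∈ f i → a ∈ f j → i ≤ j + 1) (a : α) :
    #(T.filter (a ∈ f ·)) ≤ 2 := by
  rcases (T.filter (a ∈ f ·)).eq_empty_or_nonempty with h | hne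
  · simp [h]
  set m := (T.filter (a ∈ f ·)).min' hne
  have hm := mem_filter.1 ((T.filter (a ∈ f ·)).min'_mem hne)
  calc #(T.filter (a ∈ f ·)) ≤ #(Icc m (m + 1)) := by
        refine card_le_card fun j hj => ?_
        have hmj := (T.filter (a ∈ f ·)).min'_le j hj
        have hj' := mem_filter.1 hj
        exact mem_Icc.2 ⟨hmj, hf j hj'.1 m hm.1 a hj'.2 hm.2⟩
    _ = 2 := by rw [Nat.card_Icc]; omega

lemma odd_card_filter_iff (hf : ∀ i ∈ T, ∀ j ∈ T, ∀ a, a ∈ f i → a ∈ f j → i ≤ j + 1) (a : α) :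
    Odd #(T.filter (a ∈ f ·)) ↔ ∃ q ∈ maxRuns T, #((Icc q.1 q.2).filter (a ∈ f ·)) = 1 := by
  constructor
  · intro hodd
    obtain ⟨k, hk⟩ := card_pos.1 hodd.pos
    obtain ⟨hkT, hka⟩ := mem_filter.1 hk
    obtain ⟨c, d, hrun, hkcd⟩ := exists_isMaxRun hkT
    refine ⟨(c, d), mem_maxRuns.2 hrun, ?_⟩
    rw [filter_Icc_eq_of_isMaxRun hf hrun hkcd hka]
    have := card_filter_le_two hf a
    obtain ⟨r, hr⟩ := hodd
    omega
  · rintro ⟨q, hq, hcard⟩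
    obtain ⟨k, hk⟩ := card_eq_one.1 hcard
    obtain ⟨hkq, hka⟩ := mem_filter.1 (hk ▸ mem_singleton_self k)
    rw [← filter_Icc_eq_of_isMaxRun hf (mem_maxRuns.1 hq) hkq hka, hcard]
    exact odd_one

lemma eq_of_card_filter_Icc_eq_one (hf : ∀ i ∈ T, ∀ j ∈ T, ∀ a, a ∈ f i → a ∈ f j → i ≤ j + 1)
    {q r : ℕ × ℕ} {a : α} (hq : q ∈ maxRuns T) (hr : r ∈ maxRuns T)
    (hqa : #((Icc q.1 q.2).filter (a ∈ f ·)) = 1) (hra : #((Icc r.1 r.2).filter (a ∈ f ·)) = 1) :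
    q = r := by
  obtain ⟨k, hk⟩ := card_eq_one.1 hqa
  obtain ⟨k', hk'⟩ := card_eq_one.1 hra
  obtain ⟨hkq, hka⟩ := mem_filter.1 (hk ▸ mem_singleton_self k)
  obtain ⟨hkr, hk'a⟩ := mem_filter.1 (hk' ▸ mem_singleton_self k')
  have hsame : k = k' := by
    rw [← singleton_inj, ← hk, ← hk', filter_Icc_eq_of_isMaxRun hf (mem_maxRuns.1 hq) hkq hka,
      filter_Icc_eq_of_isMaxRun hf (mem_maxRuns.1 hr) hkr hk'a]
  subst hsame
  obtain ⟨h1, h2⟩ := (mem_maxRuns.1 hq).eq_of_mem (mem_maxRuns.1 hr) hkq hkr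
  exact Prod.ext h1 h2

end MaxRuns

def nextTile (b : Bool) (p : Pos) : Pos := if b then (p.1 + 1, p.2) else (p.1, p.2 + 1)

lemma tilePosFrom_cons (b : Bool) (g : List Bool) (p : Pos) :
    tilePosFrom (b :: g) p = p :: tilePosFrom g (nextTile b p) := rfl

lemma mem_tileEdges {p : Pos} {e : SEdge} :
    e ∈ tileEdges p ↔ e = (p, true) ∨ e = (p, false) ∨ e = ((p.1 + 1, p.2), false) ∨
      e = ((p.1, p.2 + 1), true) := by
  simp [tileEdges]

lemma tileEdges_eq_nextTile (b : Bool) (p : Pos) :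
    tileEdges p = {(p, true), (p, false), (nextTile (!b) p, b), (nextTile b p, !b)} := by
  cases b <;> ext e <;> simp [tileEdges, nextTile, or_comm, or_left_comm]

lemma eq_of_mem_tileEdges_of_origin_mem {p : Pos} {e : SEdge} (he : e ∈ tileEdges p)
    (hv : p ∈ edgeVerts e) : e = (p, true) ∨ e = (p, false) := by
  rcases mem_tileEdges.1 he with rfl | rfl | rfl | rfl <;> simp [edgeVerts, Prod.ext_iff] at hv ⊢

lemma eq_of_mem_tileEdges_of_corner_mem (b : Bool) {p : Pos} {e : SEdge} (he : e ∈ tileEdges p)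
    (hv : nextTile (!b) p ∈ edgeVerts e) : e = (p, !b) ∨ e = (nextTile (!b) p, b) := by
  cases b <;> rcases mem_tileEdges.1 he with rfl | rfl | rfl | rfl <;>
    simp [edgeVerts, nextTile, Prod.ext_iff] at hv ⊢

lemma le_of_mem_edgeVerts {q v : Pos} {e : SEdge} (he : e ∈ tileEdges q) (hv : v ∈ edgeVerts e) :
    q.1 ≤ v.1 ∧ q.2 ≤ v.2 := by
  rcases mem_tileEdges.1 he with rfl | rfl | rfl | rfl <;> simp [edgeVerts] at hv <;>
    rcases hv with rfl | rfl <;> simp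

lemma le_of_mem_tilePosFrom {g : List Bool} {p q : Pos} (h : q ∈ tilePosFrom g p) :
    p.1 ≤ q.1 ∧ p.2 ≤ q.2 := by
  induction g generalizing p with
  | nil => simp_all [tilePosFrom]
  | cons b g ih =>
    rcases List.mem_cons.1 h with rfl | h
    · simp
    · have := ih h
      cases b <;> simp at this <;> omega

lemma sum_le_of_mem_tileEdges {q : Pos} {e : SEdge} (he : e ∈ tileEdges q) :
    q.1 + q.2 ≤ e.1.1 + e.1.2 ∧ e.1.1 + e.1.2 ≤ q.1 + q.2 + 1 := by
  rcases mem_tileEdges.1 he with rfl | rfl | rfl | rfl <;> simp <;> omega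

namespace Finset

lemma even_card_symmDiff_iff {α : Type*} [DecidableEq α] (s t : Finset α) :
    Even #(s ∆ t) ↔ (Even #s ↔ Even #t) := by
  have hst := card_sdiff_add_card_inter s t
  have hts := card_sdiff_add_card_inter t s
  have h : #(s ∆ t) + 2 * #(s ∩ t) = #s + #t := by
    rw [Finset.symmDiff_def, card_union_of_disjoint disjoint_sdiff_sdiff, inter_comm t s] at *
    omega
  rw [← Nat.even_add, ← h, Nat.even_add]
  simp

lemma filter_symmDiff {α : Type*} [DecidableEq α] (p : α → Prop) [DecidablePred p]
    (s t : Finset α) : (s ∆ t).filter p = s.filter p ∆ t.filter p := by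
  ext
  simp only [mem_filter, mem_symmDiff]
  tauto

end Finset

lemma mem_iff_mem_of_even_card_filter {α : Type*} [DecidableEq α] {p : α → Prop}
    [DecidablePred p] {D : Finset α} {x y : α} (hxy : x ≠ y) (hx : p x) (hy : p y)
    (hD : ∀ e ∈ D, p e → e = x ∨ e = y) (heven : Even #(D.filter p)) : x ∈ D ↔ y ∈ D := by
  have hfilter : D.filter p = ({x, y} : Finset α).filter (· ∈ D) := by
    ext e
    simp only [mem_filter, mem_insert, mem_singleton]
    constructor
    · exact fun ⟨he, hpe⟩ => ⟨hD e he hpe, he⟩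
    · rintro ⟨rfl | rfl, he⟩ <;> exact ⟨he, by assumption⟩
  rw [hfilter] at heven
  by_cases hxD : x ∈ D <;> by_cases hyD : y ∈ D <;>
    simp [filter_insert, filter_singleton, hxD, hyD, hxy] at heven ⊢

def EvenDegrees (D : Finset SEdge) : Prop := ∀ v : Pos, Even #(D.filter (v ∈ edgeVerts ·))

lemma evenDegrees_tileEdges (p : Pos) : EvenDegrees (tileEdges p) := by
  intro v
  obtain ⟨x, y⟩ := p
  obtain ⟨a, b⟩ := v
  simp only [tileEdges, filter_insert, filter_singleton, edgeVerts, mem_insert, mem_singleton,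
    Prod.ext_iff]
  split_ifs <;> simp_all <;> omega

lemma EvenDegrees.symmDiff {D E : Finset SEdge} (hD : EvenDegrees D) (hE : EvenDegrees E) :
    EvenDegrees (D ∆ E) := fun v => by
  rw [filter_symmDiff, even_card_symmDiff_iff]
  exact iff_of_true (hD v) (hE v)

def tileSetBoundary (S : Finset Pos) : Finset SEdge :=
  (S.biUnion tileEdges).filter fun e => Odd #(S.filter (e ∈ tileEdges ·))

lemma mem_tileSetBoundary {S : Finset Pos} {e : SEdge} :
    e ∈ tileSetBoundary S ↔ Odd #(S.filter (e ∈ tileEdges ·)) := by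
  refine ⟨fun h => (mem_filter.1 h).2, fun h => mem_filter.2 ⟨?_, h⟩⟩
  obtain ⟨q, hq⟩ := card_pos.1 h.pos
  exact mem_biUnion.2 ⟨q, (mem_filter.1 hq).1, (mem_filter.1 hq).2⟩

lemma tileSetBoundary_empty : tileSetBoundary ∅ = ∅ := rfl

lemma tileSetBoundary_insert {S : Finset Pos} {p : Pos} (hp : p ∉ S) :
    tileSetBoundary (insert p S) = tileSetBoundary S ∆ tileEdges p := by
  ext e
  rw [mem_symmDiff, mem_tileSetBoundary, mem_tileSetBoundary, filter_insert]
  by_cases he : e ∈ tileEdges p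
  · rw [if_pos he, card_insert_of_notMem fun h => hp (mem_filter.1 h).1, Nat.odd_add_one]
    tauto
  · simp [he]

lemma mem_iff_origin_mem_of_evenDegrees (b : Bool) {p : Pos} {D R : Finset SEdge}
    (hD : D ⊆ tileEdges p ∪ R) (hdeg : EvenDegrees D)
    (hR : ∀ e ∈ R, p ∉ edgeVerts e ∧ nextTile (!b) p ∉ edgeVerts e)
    {e : SEdge} (he : e ∈ tileEdges p) (hne : e ≠ (nextTile b p, !b)) :
    e ∈ D ↔ (p, true) ∈ D := by
  have hlocal : ∀ v, (∀ e ∈ R, v ∉ edgeVerts e) → ∀ e ∈ D, v ∈ edgeVerts e → e ∈ tileEdges p :=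
    fun v hv e heD hve => (mem_union.1 (hD heD)).resolve_right fun heR => hv e heR hve
  have horigin : (p, true) ∈ D ↔ (p, false) ∈ D :=
    mem_iff_mem_of_even_card_filter (by simp) (by simp [edgeVerts]) (by simp [edgeVerts])
      (fun e heD hv => eq_of_mem_tileEdges_of_origin_mem
        (hlocal p (fun e h => (hR e h).1) e heD hv) hv) (hdeg p)
  have hcorner : (p, !b) ∈ D ↔ (nextTile (!b) p, b) ∈ D :=
    mem_iff_mem_of_even_card_filter (by cases b <;> simp [nextTile])
      (by cases b <;> simp [edgeVerts, nextTile]) (by cases b <;> simp [edgeVerts, nextTile])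
      (fun e heD hv => eq_of_mem_tileEdges_of_corner_mem b
        (hlocal _ (fun e h => (hR e h).2) e heD hv) hv) (hdeg _)
  rw [tileEdges_eq_nextTile b] at he
  simp only [mem_insert, mem_singleton] at he
  rcases he with rfl | rfl | rfl | rfl
  · rfl
  · exact horigin.symm
  · cases b <;> simp only [Bool.not_true, Bool.not_false] at hcorner <;> tauto
  · exact absurd rfl hne

lemma biUnion_tileEdges_tilePosFrom_cons (b : Bool) (g : List Bool) (p : Pos) :
    (tilePosFrom (b :: g) p).toFinset.biUnion tileEdges =
      tileEdges p ∪ (tilePosFrom g (nextTile b p)).toFinset.biUnion tileEdges := by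
  rw [tilePosFrom_cons, List.toFinset_cons, biUnion_insert]

lemma notMem_edgeVerts_of_mem_tilePosFrom_nextTile (b : Bool) (g : List Bool) (p : Pos) :
    ∀ e ∈ (tilePosFrom g (nextTile b p)).toFinset.biUnion tileEdges,
      p ∉ edgeVerts e ∧ nextTile (!b) p ∉ edgeVerts e := by
  intro e he
  obtain ⟨q, hq, heq⟩ := mem_biUnion.1 he
  have hq' := le_of_mem_tilePosFrom (List.mem_toFinset.1 hq)
  constructor <;> intro hv <;> have := le_of_mem_edgeVerts heq hv <;> cases b <;>
    simp [nextTile] at hq' this <;> omega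

lemma mem_biUnion_tilePosFrom_nextTile (b : Bool) (g : List Bool) (p : Pos) :
    (nextTile b p, !b) ∈ (tilePosFrom g (nextTile b p)).toFinset.biUnion tileEdges :=
  mem_biUnion.2 ⟨nextTile b p, by cases g <;> simp [tilePosFrom], by cases b <;> simp [tileEdges]⟩

lemma notMem_tilePosFrom_nextTile (b : Bool) (g : List Bool) (p : Pos) :
    p ∉ tilePosFrom g (nextTile b p) := fun h => by
  have := le_of_mem_tilePosFrom h
  cases b <;> simp [nextTile] at this

lemma exists_eq_tileSetBoundary_of_subset_tileEdges {p : Pos} {D : Finset SEdge}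
    (hD : D ⊆ tileEdges p) (hdeg : EvenDegrees D) : ∃ S ⊆ {p}, D = tileSetBoundary S := by
  have hD' : D ⊆ tileEdges p ∪ ∅ := by simpa using hD
  have hiff : ∀ e ∈ tileEdges p, e ∈ D ↔ (p, true) ∈ D := fun e he => by
    -- the two candidate glued edges differ, so one of the two gluing directions applies to `e`
    by_cases hne : e = (nextTile true p, false)
    · refine mem_iff_origin_mem_of_evenDegrees false hD' hdeg (by simp) he ?_
      simp [hne, nextTile, Prod.ext_iff]
    · exact mem_iff_origin_mem_of_evenDegrees true hD' hdeg (by simp) he hne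
  by_cases h0 : (p, true) ∈ D
  · refine ⟨{p}, Subset.rfl, ?_⟩
    rw [← insert_empty, tileSetBoundary_insert (notMem_empty p), tileSetBoundary_empty,
      ← bot_eq_empty, bot_symmDiff]
    exact Subset.antisymm hD fun e he => (hiff e he).2 h0
  · exact ⟨∅, empty_subset _, eq_empty_of_forall_notMem fun e he => h0 ((hiff e (hD he)).1 he)⟩

lemma exists_eq_tileSetBoundary (g : List Bool) (p : Pos) {D : Finset SEdge}
    (hD : D ⊆ (tilePosFrom g p).toFinset.biUnion tileEdges) (hdeg : EvenDegrees D) :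
    ∃ S ⊆ (tilePosFrom g p).toFinset, D = tileSetBoundary S := by
  induction g generalizing p D with
  | nil =>
    simpa [tilePosFrom] using
      exists_eq_tileSetBoundary_of_subset_tileEdges (by simpa [tilePosFrom] using hD) hdeg
  | cons b g ih =>
    rw [biUnion_tileEdges_tilePosFrom_cons] at hD
    set R := (tilePosFrom g (nextTile b p)).toFinset.biUnion tileEdges
    have hprivate : ∀ e ∈ tileEdges p, e ∉ R → (e ∈ D ↔ (p, true) ∈ D) := fun e he heR =>
      mem_iff_origin_mem_of_evenDegrees b hD hdeg
        (notMem_edgeVerts_of_mem_tilePosFrom_nextTile b g p) he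
        fun h => heR (h ▸ mem_biUnion_tilePosFrom_nextTile b g p)
    by_cases h0 : (p, true) ∈ D
    · have hR : D ∆ tileEdges p ⊆ R := fun e he => by
        by_contra heR
        rcases mem_symmDiff.1 he with ⟨heD, het⟩ | ⟨het, heD⟩
        · exact het ((mem_union.1 (hD heD)).resolve_right heR)
        · exact heD ((hprivate e het heR).2 h0)
      obtain ⟨S, hS, hSD⟩ := ih (nextTile b p) hR (hdeg.symmDiff (evenDegrees_tileEdges p))
      have hpS : p ∉ S := fun h => notMem_tilePosFrom_nextTile b g p (List.mem_toFinset.1 (hS h))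
      refine ⟨insert p S, ?_, ?_⟩
      · rw [tilePosFrom_cons, List.toFinset_cons]
        exact insert_subset_insert _ hS
      · rw [tileSetBoundary_insert hpS, ← hSD, symmDiff_symmDiff_cancel_right]
    · have hR : D ⊆ R := fun e he => by
        by_contra heR
        have het := (mem_union.1 (hD he)).resolve_right heR
        exact h0 ((hprivate e het heR).1 he)
      obtain ⟨S, hS, hSD⟩ := ih (nextTile b p) hR hdeg
      refine ⟨S, hS.trans ?_, hSD⟩
      rw [tilePosFrom_cons, List.toFinset_cons]
      exact subset_insert _ _

def tileAt (g : List Bool) (i : ℕ) : Pos := (snakeTiles g).getD i 0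

lemma tileAt_eq_getElem {g : List Bool} {i : ℕ} (h : i < (snakeTiles g).length) :
    tileAt g i = (snakeTiles g)[i] :=
  List.getD_eq_getElem _ _ h

lemma sum_getElem_tilePosFrom (g : List Bool) (p : Pos) (i : ℕ)
    (h : i < (tilePosFrom g p).length) :
    (tilePosFrom g p)[i].1 + (tilePosFrom g p)[i].2 = p.1 + p.2 + i := by
  induction g generalizing p i with
  | nil =>
    obtain rfl : i = 0 := by simpa [tilePosFrom] using h
    simp [tilePosFrom]
  | cons b g ih =>
    cases i with
    | zero => simp [tilePosFrom]
    | succ i =>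
      simp only [tilePosFrom_cons, List.getElem_cons_succ]
      rw [ih _ i (by simpa [tilePosFrom_cons] using h)]
      cases b <;> simp [nextTile] <;> omega

lemma tileAt_sum {g : List Bool} {i : ℕ} (h : i < (snakeTiles g).length) :
    (tileAt g i).1 + (tileAt g i).2 = i := by
  rw [tileAt_eq_getElem h]
  exact (sum_getElem_tilePosFrom g (0, 0) i h).trans (by simp)

lemma tileAt_injOn (g : List Bool) : Set.InjOn (tileAt g) (range (snakeTiles g).length) :=
  fun i hi j hj hij => by
    have hi' := tileAt_sum (mem_range.1 hi)
    have hj' := tileAt_sum (mem_range.1 hj)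
    rw [hij] at hi'
    omega

lemma toFinset_snakeTiles (g : List Bool) :
    (snakeTiles g).toFinset = (range (snakeTiles g).length).image (tileAt g) := by
  ext q
  simp only [List.mem_toFinset, List.mem_iff_getElem, mem_image, mem_range]
  refine exists_congr fun i => ⟨fun ⟨hi, hq⟩ => ⟨hi, ?_⟩, fun ⟨hi, hq⟩ => ⟨hi, ?_⟩⟩ <;>
    simpa [tileAt_eq_getElem hi] using hq

lemma le_succ_of_mem_tileEdges_tileAt {g : List Bool} {i j : ℕ} {e : SEdge}
    (hi : i < (snakeTiles g).length) (hj : j < (snakeTiles g).length)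
    (hei : e ∈ tileEdges (tileAt g i)) (hej : e ∈ tileEdges (tileAt g j)) : i ≤ j + 1 := by
  have := sum_le_of_mem_tileEdges hei
  have := sum_le_of_mem_tileEdges hej
  have := tileAt_sum hi
  have := tileAt_sum hj
  omega

lemma subTiles_eq_map {g : List Bool} {c d : ℕ} (hd : d < (snakeTiles g).length) :
    subTiles g c d = (List.range' c (d + 1 - c)).map (tileAt g) := by
  apply List.ext_getElem
  · simp [subTiles]
    omega
  · intro i _ h
    simp only [subTiles, List.getElem_take, List.getElem_drop, List.getElem_map,
      List.getElem_range', one_mul]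
    rw [tileAt_eq_getElem (by simp at h; omega)]

lemma mem_subBoundary_iff {g : List Bool} {c d : ℕ} (hd : d < (snakeTiles g).length)
    {e : SEdge} :
    e ∈ subBoundary g c d ↔ #((Icc c d).filter fun k => e ∈ tileEdges (tileAt g k)) = 1 := by
  have hcount : (subTiles g c d).countP (fun p => decide (e ∈ tileEdges p)) =
      #((Icc c d).filter fun k => e ∈ tileEdges (tileAt g k)) := by
    rw [subTiles_eq_map hd, List.countP_map, List.countP_eq_length_filter]
    change _ = Multiset.card (Multiset.filter _ (List.range' c (d + 1 - c) : Multiset ℕ))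
    rw [Multiset.filter_coe, Multiset.coe_card]
    simp [Function.comp_def]
  rw [subBoundary, mem_filter, hcount, and_iff_right_iff_imp]
  intro h
  obtain ⟨k, hk⟩ := card_pos.1 (h ▸ Nat.one_pos)
  obtain ⟨hkcd, hke⟩ := mem_filter.1 hk
  refine mem_biUnion.2 ⟨tileAt g k, ?_, hke⟩
  rw [subTiles_eq_map hd, List.mem_toFinset, List.mem_map]
  exact ⟨k, List.mem_range'_1.2 (by simp at hkcd; omega), rfl⟩

lemma exists_indices_of_evenDegrees (g : List Bool) {D : Finset SEdge} (hD : D ⊆ snakeEdges g)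
    (hdeg : EvenDegrees D) :
    ∃ T ⊆ range (snakeTiles g).length,
      ∀ e, e ∈ D ↔ Odd #(T.filter fun k => e ∈ tileEdges (tileAt g k)) := by
  obtain ⟨S, hS, rfl⟩ := exists_eq_tileSetBoundary g (0, 0) hD hdeg
  rw [← snakeTiles, toFinset_snakeTiles, subset_image_iff] at hS
  obtain ⟨T, hT, rfl⟩ := hS
  refine ⟨T, hT, fun e => ?_⟩
  rw [mem_tileSetBoundary, filter_image,
    card_image_of_injOn ((tileAt_injOn g).mono (coe_subset.2 ((filter_subset _ T).trans hT)))]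

section PerfectMatchings

variable {E P P' : Finset SEdge}

lemma IsPM.exists_filter_eq_singleton (hP : IsPM E P) {v : Pos} (hv : v ∈ E.biUnion edgeVerts) :
    ∃ e, P.filter (v ∈ edgeVerts ·) = {e} := by
  obtain ⟨e, he, huniq⟩ := hP.2 v hv
  exact ⟨e, eq_singleton_iff_unique_mem.2 ⟨mem_filter.2 he, fun x hx => huniq x (mem_filter.1 hx)⟩⟩

lemma IsPM.symmDiff_subset (hP : IsPM E P) (hP' : IsPM E P') : P ∆ P' ⊆ E :=
  symmDiff_subset_union.trans (union_subset hP.1 hP'.1)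

lemma IsPM.card_filter_symmDiff (hP : IsPM E P) (hP' : IsPM E P') {v : Pos}
    (hv : v ∈ E.biUnion edgeVerts) :
    #((P ∆ P').filter (v ∈ edgeVerts ·)) = 0 ∨ #((P ∆ P').filter (v ∈ edgeVerts ·)) = 2 := by
  obtain ⟨e, he⟩ := hP.exists_filter_eq_singleton hv
  obtain ⟨e', he'⟩ := hP'.exists_filter_eq_singleton hv
  rw [filter_symmDiff, he, he']
  by_cases h : e = e'
  · simp [h]
  · rw [symmDiff_eq_union (disjoint_singleton.2 h), ← insert_eq, card_pair h]
    exact Or.inr rfl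

lemma IsPM.evenDegrees_symmDiff (hP : IsPM E P) (hP' : IsPM E P') : EvenDegrees (P ∆ P') := by
  intro v
  by_cases hv : v ∈ E.biUnion edgeVerts
  · rcases hP.card_filter_symmDiff hP' hv with h | h <;> rw [h] <;> decide
  · have hempty : (P ∆ P').filter (v ∈ edgeVerts ·) = ∅ := eq_empty_of_forall_notMem fun e he =>
      hv (mem_biUnion.2 ⟨e, hP.symmDiff_subset hP' (mem_filter.1 he).1, (mem_filter.1 he).2⟩)
    simp [hempty]

end PerfectMatchings

/-- For any two perfect matchings `P, P'` of a snake graph `G`, the symmetric difference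
`(P ∪ P') \ (P ∩ P')` is a disjoint union of cycles in `G` (every vertex meets `0` or `2`
of its edges), and each such cycle is the boundary of a set of consecutive tiles forming
a connected snake subgraph of `G`. -/
theorem symmdiff_is_union_of_subsnake_boundaries (g : List Bool) (P P' : Finset SEdge)
    (hP : IsPM (snakeEdges g) P) (hP' : IsPM (snakeEdges g) P') :
    (∀ v ∈ snakeVerts g,
      ((((P ∪ P') \ (P ∩ P')).filter (fun e => v ∈ edgeVerts e)).card = 0 ∨
        (((P ∪ P') \ (P ∩ P')).filter (fun e => v ∈ edgeVerts e)).card = 2)) ∧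
    ∃ I : Finset (ℕ × ℕ),
      (∀ q ∈ I, q.1 ≤ q.2 ∧ q.2 < (snakeTiles g).length) ∧
      ((I : Set (ℕ × ℕ)).Pairwise fun q r =>
        Disjoint (subBoundary g q.1 q.2) (subBoundary g r.1 r.2)) ∧
      (P ∪ P') \ (P ∩ P') = I.biUnion (fun q => subBoundary g q.1 q.2) := by
  rw [show (P ∪ P') \ (P ∩ P') = P ∆ P' from (symmDiff_eq_sup_sdiff_inf P P').symm]
  refine ⟨fun v hv => hP.card_filter_symmDiff hP' hv, ?_⟩
  obtain ⟨T, hT, hD⟩ :=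
    exists_indices_of_evenDegrees g (hP.symmDiff_subset hP') (hP.evenDegrees_symmDiff hP')
  have hf : ∀ i ∈ T, ∀ j ∈ T, ∀ e, e ∈ tileEdges (tileAt g i) → e ∈ tileEdges (tileAt g j) →
      i ≤ j + 1 := fun i hi j hj _ =>
    le_succ_of_mem_tileEdges_tileAt (mem_range.1 (hT hi)) (mem_range.1 (hT hj))
  have hI : ∀ q ∈ maxRuns T, q.1 ≤ q.2 ∧ q.2 < (snakeTiles g).length := fun q hq =>
    have h := mem_maxRuns.1 hq
    ⟨h.1, mem_range.1 (hT (h.2.1 (right_mem_Icc.2 h.1)))⟩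
  refine ⟨maxRuns T, hI, fun q hq r hr hne => disjoint_left.2 fun e heq her => hne ?_, ?_⟩
  · rw [mem_subBoundary_iff (hI q hq).2] at heq
    rw [mem_subBoundary_iff (hI r hr).2] at her
    exact eq_of_card_filter_Icc_eq_one hf hq hr heq her
  · ext e
    rw [hD, odd_card_filter_iff hf, mem_biUnion]
    exact exists_congr fun q => and_congr_right fun hq => (mem_subBoundary_iff (hI q hq).2).symm
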